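/- Let n ≥ 3 and A₀, A₁, A₂ symmetric n×n matrices satisfying: there exist μ₁, μ₂ with μ₁A₁+μ₂A₂ positive definite, and there exists x⁰ with x⁰ᵀA₁x⁰=1, x⁰ᵀA₂x⁰<1. If x* is a local but not global minimizer of xᵀA₀x over {x : xᵀA₁x = 1, xᵀA₂x ≤ 1}, then xᵀA₂x* = 1 and any KKT multipliers α ∈ R, β ≥ 0 at x* satisfy β > 0 (strict complementarity). -/
import Mathlib

open Matrix

/-- The quadratic form `xᵀ A x` on Euclidean space. -/
noncomputable def quadForm {n : ℕ} (A : Matrix (Fin n) (Fin n) ℝ)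
    (x : EuclideanSpace ℝ (Fin n)) : ℝ :=
  ∑ i, ∑ j, A i j * x i * x j

set_option maxHeartbeats 1000000

namespace Stmt13Aux


variable {n : ℕ}

/-- bilinear form -/
noncomputable def bq (A : Matrix (Fin n) (Fin n) ℝ) (x y : EuclideanSpace ℝ (Fin n)) : ℝ :=
  ∑ i, ∑ j, A i j * x i * y j

lemma quadForm_eq_bq (A : Matrix (Fin n) (Fin n) ℝ) (x : EuclideanSpace ℝ (Fin n)) :
    quadForm A x = bq A x x := rfl

lemma bq_symm {A : Matrix (Fin n) (Fin n) ℝ} (hA : Aᵀ = A) (x y : EuclideanSpace ℝ (Fin n)) :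
    bq A x y = bq A y x := by
  have hA' : ∀ i j, A i j = A j i := fun i j => (congrFun (congrFun hA j) i : Aᵀ j i = A j i)
  unfold bq
  rw [Finset.sum_comm]
  exact Finset.sum_congr rfl fun j _ => Finset.sum_congr rfl fun i _ => by rw [hA' i j]; ring

lemma bq_add_smul (A : Matrix (Fin n) (Fin n) ℝ) (x y : EuclideanSpace ℝ (Fin n)) (s t : ℝ) :
    bq A (s • x + t • y) (s • x + t • y) =
      s^2 * bq A x x + s*t*bq A x y + s*t*bq A y x + t^2 * bq A y y := by
  unfold bq
  have h : ∀ i j, A i j * ((s • x + t • y) i) * ((s • x + t • y) j) =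
      s^2 * (A i j * x i * x j) + s*t*(A i j * x i * y j) + s*t*(A i j * y i * x j)
        + t^2 * (A i j * y i * y j) := by
    intro i j
    simp only [PiLp.add_apply, PiLp.smul_apply, smul_eq_mul]
    ring
  simp only [h, Finset.sum_add_distrib, ← Finset.mul_sum]

lemma bq_sub_smul_right (A : Matrix (Fin n) (Fin n) ℝ) (x y z : EuclideanSpace ℝ (Fin n)) (s : ℝ) :
    bq A x (y - s • z) = bq A x y - s * bq A x z := by
  unfold bq
  have h : ∀ i j, A i j * x i * ((y - s • z) j) =
      A i j * x i * y j - s * (A i j * x i * z j) := by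
    intro i j
    simp only [PiLp.sub_apply, PiLp.smul_apply, smul_eq_mul]
    ring
  simp only [h, Finset.sum_sub_distrib, ← Finset.mul_sum]

lemma bq_of_mulVec_zero {M : Matrix (Fin n) (Fin n) ℝ} {x : EuclideanSpace ℝ (Fin n)}
    (h : M.mulVec (fun i => x i) = 0) (z : EuclideanSpace ℝ (Fin n)) : bq M z x = 0 := by
  have h' : ∀ i, ∑ j, M i j * x j = 0 := fun i => congrFun h i
  unfold bq
  calc ∑ i, ∑ j, M i j * z i * x j = ∑ i, z i * ∑ j, M i j * x j := by
        refine Finset.sum_congr rfl fun i _ => ?_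
        rw [Finset.mul_sum]
        exact Finset.sum_congr rfl fun j _ => by ring
    _ = 0 := by simp [h']

lemma bq_matrix_comb (A B C : Matrix (Fin n) (Fin n) ℝ) (α β : ℝ)
    (x y : EuclideanSpace ℝ (Fin n)) :
    bq (A + α • B + β • C) x y = bq A x y + α * bq B x y + β * bq C x y := by
  unfold bq
  have h : ∀ i j, (A + α • B + β • C) i j * x i * y j =
      A i j * x i * y j + α * (B i j * x i * y j) + β * (C i j * x i * y j) := by
    intro i j
    simp only [Matrix.add_apply, Matrix.smul_apply, smul_eq_mul]
    ring
  simp only [h, Finset.sum_add_distrib, ← Finset.mul_sum]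


lemma quad_curve {A : Matrix (Fin n) (Fin n) ℝ} (hA : Aᵀ = A)
    (x v : EuclideanSpace ℝ (Fin n)) (s t : ℝ) :
    quadForm A (s • x + t • v) =
      s^2 * quadForm A x + 2*(s*t) * bq A x v + t^2 * quadForm A v := by
  rw [quadForm_eq_bq, bq_add_smul, ← quadForm_eq_bq, ← quadForm_eq_bq, bq_symm hA v x]
  ring

/-- Core curve lemma. -/
lemma key {A₀ A₁ A₂ : Matrix (Fin n) (Fin n) ℝ}
    (h1 : A₁ᵀ = A₁)
    {xs : EuclideanSpace ℝ (Fin n)} (hfeas1 : quadForm A₁ xs = 1)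
    (hloc : ∃ ε > 0, ∀ x : EuclideanSpace ℝ (Fin n),
      quadForm A₁ x = 1 → quadForm A₂ x ≤ 1 → ‖x - xs‖ < ε →
      quadForm A₀ xs ≤ quadForm A₀ x)
    (v : EuclideanSpace ℝ (Fin n)) (hv : bq A₁ xs v = 0) :
    ∃ δ : ℝ, 0 < δ ∧ δ ≤ 1 ∧ ∀ t : ℝ, |t| ≤ δ →
      ∃ c : ℝ, 1/2 ≤ c ∧ c ≤ 2 ∧ c^2 = 1 - t^2 * bq A₁ v v ∧
      (quadForm A₂ (c • xs + t • v) ≤ 1 →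
        quadForm A₀ xs ≤ quadForm A₀ (c • xs + t • v)) := by
  obtain ⟨ε, hε, hl⟩ := hloc
  set a : ℝ := bq A₁ v v with ha
  clear_value a
  set K : ℝ := |a| * ‖xs‖ + ‖v‖ + 1 with hK
  clear_value K
  have hK1 : 1 ≤ K := by
    have := abs_nonneg a; have := norm_nonneg xs; have := norm_nonneg v
    nlinarith [mul_nonneg (abs_nonneg a) (norm_nonneg xs)]
  have hA1 : (1:ℝ) ≤ |a| + 1 := by linarith [abs_nonneg a]
  refine ⟨min (min 1 (ε / (2 * K))) (1 / (2 * (|a| + 1))), ?_, ?_, ?_⟩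
  · exact lt_min (lt_min one_pos (by positivity)) (by positivity)
  · exact le_trans (min_le_left _ _) (min_le_left _ _)
  intro t ht
  have ht1 : |t| ≤ 1 := le_trans ht (le_trans (min_le_left _ _) (min_le_left _ _))
  have htε : |t| ≤ ε / (2 * K) := le_trans ht (le_trans (min_le_left _ _) (min_le_right _ _))
  have hts : |t| ≤ 1 / (2 * (|a| + 1)) := le_trans ht (min_le_right _ _)
  have habs : t^2 = |t| * |t| := by rw [← sq_abs t]; ring
  have hsq : t^2 * (|a| + 1) ≤ 1/4 := by
    have e1 : |t| * |t| ≤ (1/(2*(|a|+1))) * (1/(2*(|a|+1))) :=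
      mul_le_mul hts hts (abs_nonneg t) (by positivity)
    have e2 : (1/(2*(|a|+1))) * (1/(2*(|a|+1))) * (|a|+1) = 1/(4*(|a|+1)) := by
      field_simp; ring
    have e3 : 1/(4*(|a|+1)) ≤ (1:ℝ)/4 := by
      apply div_le_div_of_nonneg_left (by norm_num) (by norm_num)
      linarith
    nlinarith [abs_nonneg a]
  have hta : t^2 * |a| ≤ 1/4 := by nlinarith [sq_nonneg t]
  have htann : 0 ≤ t^2 * |a| := by positivity
  have haa : t^2 * a ≤ t^2 * |a| := mul_le_mul_of_nonneg_left (le_abs_self a) (sq_nonneg t)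
  have haa2 : -(t^2 * |a|) ≤ t^2 * a := by nlinarith [neg_abs_le a, sq_nonneg t]
  have hca : (0:ℝ) ≤ 1 - t^2 * a := by linarith
  set c : ℝ := Real.sqrt (1 - t^2 * a) with hc
  clear_value c
  have hc2 : c^2 = 1 - t^2 * a := by rw [hc]; exact Real.sq_sqrt hca
  have hcnn : 0 ≤ c := by rw [hc]; exact Real.sqrt_nonneg _
  have hclb : 1/2 ≤ c := by nlinarith
  have hcub : c ≤ 2 := by nlinarith
  refine ⟨c, hclb, hcub, hc2, ?_⟩
  intro hfeas2'
  have hq1 : quadForm A₁ (c • xs + t • v) = 1 := by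
    rw [quad_curve h1, hfeas1, hv, hc2, quadForm_eq_bq A₁ v, ← ha]; ring
  have hc1 : |c - 1| ≤ t^2 * |a| := by
    rw [abs_le]
    constructor
    · nlinarith [mul_self_nonneg (t^2*|a|)]
    · nlinarith [mul_self_nonneg (t^2*|a|)]
  have hclose : ‖(c • xs + t • v) - xs‖ < ε := by
    have hdiff : (c • xs + t • v) - xs = (c - 1) • xs + t • v := by
      rw [sub_smul, one_smul]; abel
    rw [hdiff]
    have hb : ‖(c - 1) • xs + t • v‖ ≤ |c - 1| * ‖xs‖ + |t| * ‖v‖ := by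
      calc ‖(c - 1) • xs + t • v‖ ≤ ‖(c - 1) • xs‖ + ‖t • v‖ := norm_add_le _ _
        _ = |c - 1| * ‖xs‖ + |t| * ‖v‖ := by
            rw [norm_smul, norm_smul, Real.norm_eq_abs, Real.norm_eq_abs]
    have ht2 : t^2 ≤ |t| := by nlinarith [abs_nonneg t]
    have hb2 : |c-1| * ‖xs‖ + |t| * ‖v‖ ≤ |t| * K := by
      have e1 : |c-1| * ‖xs‖ ≤ (t^2 * |a|) * ‖xs‖ :=
        mul_le_mul_of_nonneg_right hc1 (norm_nonneg _)
      have e2 : (t^2 * |a|) * ‖xs‖ ≤ (|t| * |a|) * ‖xs‖ := by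
        have : t^2 * |a| ≤ |t| * |a| := mul_le_mul_of_nonneg_right ht2 (abs_nonneg a)
        exact mul_le_mul_of_nonneg_right this (norm_nonneg _)
      rw [hK]
      nlinarith [abs_nonneg t]
    have hb3 : |t| * K ≤ ε / 2 := by
      have h2K : (0:ℝ) < 2 * K := by linarith
      have e0 : |t| * (2 * K) ≤ ε := (le_div_iff₀ h2K).mp htε
      have e1 : |t| * (2 * K) = 2 * (|t| * K) := by ring
      linarith
    calc ‖(c - 1) • xs + t • v‖ ≤ |t| * K := le_trans hb hb2
      _ ≤ ε / 2 := hb3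
      _ < ε := by linarith
  exact hl _ hq1 hfeas2' hclose


end Stmt13Aux


open Stmt13Aux in
theorem stmt13 {n : ℕ} (hn : 3 ≤ n) (A₀ A₁ A₂ : Matrix (Fin n) (Fin n) ℝ)
    (h0 : A₀ᵀ = A₀) (h1 : A₁ᵀ = A₁) (h2 : A₂ᵀ = A₂)
    (hC1 : ∃ μ₁ μ₂ : ℝ, ∀ x : Fin n → ℝ, x ≠ 0 → 0 < x ⬝ᵥ (μ₁ • A₁ + μ₂ • A₂).mulVec x)
    (hC2 : ∃ x0 : Fin n → ℝ, x0 ⬝ᵥ A₁.mulVec x0 = 1 ∧ x0 ⬝ᵥ A₂.mulVec x0 < 1)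
    (xs : EuclideanSpace ℝ (Fin n))
    (hfeas1 : quadForm A₁ xs = 1) (hfeas2 : quadForm A₂ xs ≤ 1)
    -- local minimizer
    (hloc : ∃ ε > 0, ∀ x : EuclideanSpace ℝ (Fin n),
      quadForm A₁ x = 1 → quadForm A₂ x ≤ 1 → ‖x - xs‖ < ε →
      quadForm A₀ xs ≤ quadForm A₀ x)
    -- but not a global minimizer
    (hnotglob : ∃ x : EuclideanSpace ℝ (Fin n),
      quadForm A₁ x = 1 ∧ quadForm A₂ x ≤ 1 ∧ quadForm A₀ x < quadForm A₀ xs) :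
    quadForm A₂ xs = 1 ∧
    ∀ α β : ℝ, 0 ≤ β →
      (A₀ + α • A₁ + β • A₂).mulVec (fun i => xs i) = 0 →
      β * (quadForm A₂ xs - 1) = 0 →
      0 < β := by
  classical
  obtain ⟨y, hy1, hy2, hy0⟩ := hnotglob
  obtain ⟨lam, hlam⟩ : ∃ l : ℝ, l = quadForm A₀ xs := ⟨_, rfl⟩
  obtain ⟨t₀, ht₀⟩ : ∃ t : ℝ, t = bq A₁ xs y := ⟨_, rfl⟩
  obtain ⟨v, hvdef⟩ : ∃ v : EuclideanSpace ℝ (Fin n), v = y - t₀ • xs := ⟨_, rfl⟩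
  have hv : bq A₁ xs v = 0 := by
    rw [hvdef, bq_sub_smul_right, ← quadForm_eq_bq, hfeas1, ← ht₀]; ring
  have hy_decomp : y = t₀ • xs + (1:ℝ) • v := by
    rw [one_smul, hvdef]; abel
  obtain ⟨a, ha⟩ : ∃ a : ℝ, a = bq A₁ v v := ⟨_, rfl⟩
  obtain ⟨w, hwdef⟩ : ∃ w : ℝ, w = bq A₂ xs v := ⟨_, rfl⟩
  obtain ⟨m, hmdef⟩ : ∃ m : ℝ, m = bq A₀ xs v := ⟨_, rfl⟩
  obtain ⟨u, hudef⟩ : ∃ u : ℝ, u = quadForm A₂ v := ⟨_, rfl⟩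
  obtain ⟨q₀v, hq₀v⟩ : ∃ z : ℝ, z = quadForm A₀ v := ⟨_, rfl⟩
  obtain ⟨r, hrdef⟩ : ∃ r : ℝ, r = q₀v - a * lam := ⟨_, rfl⟩
  have hA1vv : quadForm A₁ v = a := (quadForm_eq_bq A₁ v).trans ha.symm
  have F1 : a + t₀^2 = 1 := by
    rw [hy_decomp, quad_curve h1, hfeas1, hv, hA1vv] at hy1
    linear_combination hy1
  have F2 : t₀^2 * quadForm A₂ xs + 2*t₀*w + u ≤ 1 := by
    rw [hy_decomp, quad_curve h2, ← hwdef, ← hudef] at hy2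
    nlinarith [hy2]
  have F3 : t₀^2 * lam + 2*t₀*m + q₀v < lam := by
    rw [hy_decomp, quad_curve h0, ← hmdef, ← hq₀v, ← hlam] at hy0
    nlinarith [hy0]
  obtain ⟨δ, hδ, hδ1, hkey⟩ := key h1 hfeas1 hloc v hv
  -- ==================== Part 1 ====================
  have hq2 : quadForm A₂ xs = 1 := by
    by_contra hne
    have hlt : quadForm A₂ xs < 1 := lt_of_le_of_ne hfeas2 hne
    obtain ⟨K₂, hK₂⟩ : ∃ K : ℝ,
        K = |a| * |quadForm A₂ xs| + 4*|w| + |u| + 1 := ⟨_, rfl⟩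
    have hK₂1 : 1 ≤ K₂ := by
      rw [hK₂]
      nlinarith [mul_nonneg (abs_nonneg a) (abs_nonneg (quadForm A₂ xs)),
        abs_nonneg w, abs_nonneg u]
    obtain ⟨δ₂, hδ₂def⟩ : ∃ d : ℝ, d = (1 - quadForm A₂ xs) / K₂ := ⟨_, rfl⟩
    have hδ₂ : 0 < δ₂ := by
      rw [hδ₂def]; exact div_pos (by linarith) (by linarith)
    have main : ∀ t : ℝ, |t| ≤ min δ δ₂ →
        ∃ c : ℝ, 1/2 ≤ c ∧ c ≤ 2 ∧ 0 ≤ 2*(c*t)*m + t^2*r := by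
      intro t ht'
      have htδ : |t| ≤ δ := le_trans ht' (min_le_left _ _)
      have htδ₂ : |t| ≤ δ₂ := le_trans ht' (min_le_right _ _)
      have ht1 : |t| ≤ 1 := le_trans htδ hδ1
      have ht2 : t^2 ≤ |t| := by nlinarith [sq_abs t, abs_nonneg t]
      obtain ⟨c, hc1, hc2', hceq, himp⟩ := hkey t htδ
      rw [← ha] at hceq
      have hfeasc : quadForm A₂ (c • xs + t • v) ≤ 1 := by
        rw [quad_curve h2, hceq, ← hwdef, ← hudef]
        have b1 := mul_le_mul_of_nonneg_left
          (neg_abs_le (a * quadForm A₂ xs)) (sq_nonneg t)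
        have b2 : t^2 * |a * quadForm A₂ xs| ≤ |t| * (|a| * |quadForm A₂ xs|) := by
          rw [abs_mul]
          exact mul_le_mul_of_nonneg_right ht2
            (mul_nonneg (abs_nonneg a) (abs_nonneg (quadForm A₂ xs)))
        have e1 : -(t^2*(a*quadForm A₂ xs)) ≤ |t| * (|a| * |quadForm A₂ xs|) := by
          nlinarith [b1, b2]
        have e2 : 2*(c*t)*w ≤ |t| * (4*|w|) := by
          have b3 : c*(t*w) ≤ c*|t*w| :=
            mul_le_mul_of_nonneg_left (le_abs_self (t*w)) (by linarith)
          have b4 : c*|t*w| ≤ 2*|t*w| :=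
            mul_le_mul_of_nonneg_right hc2' (abs_nonneg (t*w))
          have b5 : |t*w| = |t| *|w| := abs_mul t w
          nlinarith [b3, b4, b5]
        have e3 : t^2*u ≤ |t| * |u| := by
          have b6 : t^2*u ≤ t^2*|u| :=
            mul_le_mul_of_nonneg_left (le_abs_self u) (sq_nonneg t)
          have b7 : t^2*|u| ≤ |t| *|u| := mul_le_mul_of_nonneg_right ht2 (abs_nonneg u)
          linarith
        have e4 : |t| * K₂ ≤ 1 - quadForm A₂ xs := by
          rw [hδ₂def] at htδ₂
          have := (le_div_iff₀ (by linarith : (0:ℝ) < K₂)).mp htδ₂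
          linarith
        rw [hK₂] at e4
        nlinarith [abs_nonneg t, e1, e2, e3, e4]
      have hlow := himp hfeasc
      rw [quad_curve h0, hceq, ← hmdef, ← hq₀v, ← hlam] at hlow
      refine ⟨c, hc1, hc2', ?_⟩
      have e : (1 - t^2*a)*lam + 2*(c*t)*m + t^2*q₀v - lam
          = 2*(c*t)*m + t^2*r := by rw [hrdef]; ring
      linarith [hlow]
    have hδ' : 0 < min δ δ₂ := lt_min hδ hδ₂
    have hm0 : m = 0 := by
      by_contra hmne
      rcases lt_or_gt_of_ne hmne with hneg | hpos
      · -- m < 0 : use positive t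
        obtain ⟨s, hsdef⟩ : ∃ s : ℝ, s = min (min δ δ₂) ((-m) / (2*|r| + 2)) := ⟨_, rfl⟩
        have hspos : 0 < s := by
          rw [hsdef]
          exact lt_min hδ' (div_pos (by linarith) (by positivity))
        have hs2 : s ≤ (-m)/(2*|r|+2) := by rw [hsdef]; exact min_le_right _ _
        obtain ⟨c, hc1, hc2', hineq⟩ := main s
          (by rw [abs_of_pos hspos, hsdef]; exact min_le_left _ _)
        have htm : s * m < 0 := mul_neg_of_pos_of_neg hspos hneg
        have e1 : 2*(c*s)*m ≤ s*m := by
          have b1 : 0 ≤ (2*c-1)*(-(s*m)) :=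
            mul_nonneg (by linarith) (by linarith)
          have b2 : (2*c-1)*(-(s*m)) = s*m - 2*(c*s)*m := by ring
          linarith
        have e2 : s^2*r ≤ s^2*|r| := mul_le_mul_of_nonneg_left (le_abs_self r) (sq_nonneg s)
        have e3 : s*(2*|r|+2) ≤ -m := (le_div_iff₀ (by positivity)).mp hs2
        have e4 : 0 ≤ s*m + s^2*|r| := by linarith [hineq, e1, e2]
        have e5 : 0 ≤ m + s*|r| := by
          by_contra hcc
          push_neg at hcc
          have hcon : s*(m + s*|r|) < 0 := mul_neg_of_pos_of_neg hspos hcc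
          linarith [e4, hcon]
        have e6 : s*(2*|r|+2) = 2*(s*|r|) + 2*s := by ring
        linarith [mul_nonneg hspos.le (abs_nonneg r), e3, e5, e6]
      · -- m > 0 : use negative t
        obtain ⟨s, hsdef⟩ : ∃ s : ℝ, s = min (min δ δ₂) (m / (2*|r| + 2)) := ⟨_, rfl⟩
        have hspos : 0 < s := by
          rw [hsdef]
          exact lt_min hδ' (div_pos hpos (by positivity))
        have hs2 : s ≤ m/(2*|r|+2) := by rw [hsdef]; exact min_le_right _ _
        obtain ⟨c, hc1, hc2', hineq⟩ := main (-s)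
          (by rw [abs_neg, abs_of_pos hspos, hsdef]; exact min_le_left _ _)
        have htm : 0 < s * m := mul_pos hspos hpos
        have e1 : 2*(c*(-s))*m ≤ -(s*m) := by
          have b1 : 0 ≤ (2*c-1)*(s*m) := mul_nonneg (by linarith) htm.le
          have b2 : (2*c-1)*(s*m) = -(s*m) - 2*(c*(-s))*m := by ring
          linarith
        have e2 : (-s)^2*r ≤ s^2*|r| := by
          have b3 := mul_le_mul_of_nonneg_left (le_abs_self r) (sq_nonneg s)
          linarith [b3]
        have e3 : s*(2*|r|+2) ≤ m := (le_div_iff₀ (by positivity)).mp hs2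
        have e4 : 0 ≤ -(s*m) + s^2*|r| := by linarith [hineq, e1, e2]
        have e5 : 0 ≤ -m + s*|r| := by
          by_contra hcc
          push_neg at hcc
          have hcon : s*(-m + s*|r|) < 0 := mul_neg_of_pos_of_neg hspos hcc
          linarith [e4, hcon]
        have e6 : s*(2*|r|+2) = 2*(s*|r|) + 2*s := by ring
        linarith [mul_nonneg hspos.le (abs_nonneg r), e3, e5, e6]
    have hr0 : 0 ≤ r := by
      obtain ⟨c, hc1, hc2', hineq⟩ := main (min δ δ₂) (by rw [abs_of_pos hδ'])
      rw [hm0] at hineq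
      by_contra hrneg
      push_neg at hrneg
      have hcon := mul_neg_of_pos_of_neg (mul_pos hδ' hδ') hrneg
      have he : (min δ δ₂)*(min δ δ₂)*r = 2*(c*(min δ δ₂))*0 + (min δ δ₂)^2*r := by ring
      linarith [hineq, hcon, he]
    -- contradiction
    rw [hm0] at F3
    have haval : a = 1 - t₀^2 := by linarith
    have e : a*lam = lam - t₀^2*lam := by rw [haval]; ring
    have : r < 0 := by rw [hrdef]; linarith [F3, e]
    linarith
  -- ==================== Part 2 ====================
  refine ⟨hq2, ?_⟩
  intro α β hβ hkkt hcomp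
  rcases lt_or_eq_of_le hβ with hb | hb
  · exact hb
  exfalso
  have hβ0 : β = 0 := hb.symm
  subst hβ0
  have hz : ∀ z : EuclideanSpace ℝ (Fin n),
      bq A₀ z xs + α * bq A₁ z xs + 0 * bq A₂ z xs = 0 := by
    intro z
    rw [← bq_matrix_comb]
    exact bq_of_mulVec_zero hkkt z
  have hα : α = -lam := by
    have hx := hz xs
    rw [← quadForm_eq_bq, ← quadForm_eq_bq, ← hlam, hfeas1] at hx
    linarith
  have hm0 : m = 0 := by
    have hxv := hz v
    rw [bq_symm h1 v xs, hv] at hxv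
    have hb0 : bq A₀ v xs = 0 := by linarith
    rw [hmdef, bq_symm h0 xs v, hb0]
  have hr0 : 0 ≤ r := by
    rcases eq_or_ne w 0 with hw0 | hwne
    · -- w = 0 : u ≤ a and curve feasible for t = δ
      have hua : u ≤ a := by
        rw [hq2, hw0] at F2
        linarith [F2, F1]
      obtain ⟨c, hc1, hc2', hceq, himp⟩ := hkey δ (by rw [abs_of_pos hδ])
      rw [← ha] at hceq
      have hfeasc : quadForm A₂ (c • xs + δ • v) ≤ 1 := by
        rw [quad_curve h2, hceq, hq2, ← hwdef, ← hudef, hw0]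
        have := mul_le_mul_of_nonneg_left hua (sq_nonneg δ)
        linarith [this]
      have hlow := himp hfeasc
      rw [quad_curve h0, hceq, ← hmdef, ← hq₀v, ← hlam, hm0] at hlow
      have e : (1 - δ^2*a)*lam + 2*(c*δ)*0 + δ^2*q₀v - lam = δ^2*r := by
        rw [hrdef]; ring
      by_contra hrneg
      push_neg at hrneg
      have hcon := mul_neg_of_pos_of_neg (mul_pos hδ hδ) hrneg
      have he2 : δ*δ*r = δ^2*r := by ring
      linarith [hlow, e, hcon, he2]
    rcases lt_or_gt_of_ne hwne with hwneg | hwpos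
    · -- w < 0 : positive t
      obtain ⟨s, hsdef⟩ : ∃ s : ℝ, s = min δ ((-w)/(|u - a| + 1)) := ⟨_, rfl⟩
      have hspos : 0 < s := by
        rw [hsdef]
        exact lt_min hδ (div_pos (by linarith) (by positivity))
      have hs1 : s ≤ δ := by rw [hsdef]; exact min_le_left _ _
      have hs2 : s * (|u - a| + 1) ≤ -w := by
        refine (le_div_iff₀ (by positivity)).mp ?_
        rw [hsdef]; exact min_le_right _ _
      obtain ⟨c, hc1, hc2', hceq, himp⟩ := hkey s (by rw [abs_of_pos hspos]; exact hs1)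
      rw [← ha] at hceq
      have hfeasc : quadForm A₂ (c • xs + s • v) ≤ 1 := by
        rw [quad_curve h2, hceq, hq2, ← hwdef, ← hudef]
        have hsw : s*w < 0 := mul_neg_of_pos_of_neg hspos hwneg
        have e1 : 2*(c*s)*w ≤ s*w := by
          have b1 : 0 ≤ (2*c-1)*(-(s*w)) := mul_nonneg (by linarith) (by linarith)
          have b2 : (2*c-1)*(-(s*w)) = s*w - 2*(c*s)*w := by ring
          linarith
        have e3 : s*|u-a| ≤ -w := by linarith [hs2, hspos]
        have e4 : s*(s*|u-a|) ≤ s*(-w) := mul_le_mul_of_nonneg_left e3 hspos.le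
        have e2 : s^2*(u-a) ≤ s*(s*|u-a|) := by
          have b3 := mul_le_mul_of_nonneg_left (le_abs_self (u-a)) (sq_nonneg s)
          have b4 : s*(s*|u-a|) = s^2*|u-a| := by ring
          linarith [b3, b4]
        linarith [e1, e2, e4]
      have hlow := himp hfeasc
      rw [quad_curve h0, hceq, ← hmdef, ← hq₀v, ← hlam, hm0] at hlow
      have e : (1 - s^2*a)*lam + 2*(c*s)*0 + s^2*q₀v - lam = s^2*r := by
        rw [hrdef]; ring
      by_contra hrneg
      push_neg at hrneg
      have hcon := mul_neg_of_pos_of_neg (mul_pos hspos hspos) hrneg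
      have he2 : s*s*r = s^2*r := by ring
      linarith [hlow, e, hcon, he2]
    · -- w > 0 : negative t
      obtain ⟨s, hsdef⟩ : ∃ s : ℝ, s = min δ (w/(|u - a| + 1)) := ⟨_, rfl⟩
      have hspos : 0 < s := by
        rw [hsdef]
        exact lt_min hδ (div_pos hwpos (by positivity))
      have hs1 : s ≤ δ := by rw [hsdef]; exact min_le_left _ _
      have hs2 : s * (|u - a| + 1) ≤ w := by
        refine (le_div_iff₀ (by positivity)).mp ?_
        rw [hsdef]; exact min_le_right _ _
      obtain ⟨c, hc1, hc2', hceq, himp⟩ := hkey (-s)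
        (by rw [abs_neg, abs_of_pos hspos]; exact hs1)
      rw [← ha] at hceq
      have hfeasc : quadForm A₂ (c • xs + (-s) • v) ≤ 1 := by
        rw [quad_curve h2, hceq, hq2, ← hwdef, ← hudef]
        have hsw : 0 < s*w := mul_pos hspos hwpos
        have e1 : 2*(c*(-s))*w ≤ -(s*w) := by
          have b1 : 0 ≤ (2*c-1)*(s*w) := mul_nonneg (by linarith) hsw.le
          have b2 : (2*c-1)*(s*w) = -(s*w) - 2*(c*(-s))*w := by ring
          linarith
        have e3 : s*|u-a| ≤ w := by linarith [hs2, hspos]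
        have e4 : s*(s*|u-a|) ≤ s*w := mul_le_mul_of_nonneg_left e3 hspos.le
        have e2 : (-s)^2*(u-a) ≤ s*(s*|u-a|) := by
          have b3 := mul_le_mul_of_nonneg_left (le_abs_self (u-a)) (sq_nonneg s)
          have b4 : s*(s*|u-a|) = s^2*|u-a| := by ring
          linarith [b3, b4]
        linarith [e1, e2, e4]
      have hlow := himp hfeasc
      rw [quad_curve h0, hceq, ← hmdef, ← hq₀v, ← hlam, hm0] at hlow
      have e : (1 - (-s)^2*a)*lam + 2*(c*(-s))*0 + (-s)^2*q₀v - lam = s^2*r := by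
        rw [hrdef]; ring
      by_contra hrneg
      push_neg at hrneg
      have hcon := mul_neg_of_pos_of_neg (mul_pos hspos hspos) hrneg
      have he2 : s*s*r = s^2*r := by ring
      linarith [hlow, e, hcon, he2]
  -- final contradiction
  rw [hm0] at F3
  have haval : a = 1 - t₀^2 := by linarith
  have e : a*lam = lam - t₀^2*lam := by rw [haval]; ring
  have : r < 0 := by rw [hrdef]; linarith [F3, e]
  linarith
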